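/- arXiv:2004.06529 — 2 statements merged into one kernel-verified Lean document; each statement's English description precedes it below -/
import Mathlib

section
/- Let 0 < λ < 1 and let ∂ be a nonconstant meromorphic (or just differentiable complex analytic on a domain) function satisfying 9 ∂² (∂')² = 2 (1 − ∂²)(4∂³ − 3∂ + 1 − 2λ²) on a neighbourhood of a point a. Then ∂(a) ≠ 0, provided ∂ is nonconstant; i.e., any analytic solution of this equation that vanishes at some point is constant. -/
/-! At a zero `a` of `p` the equation forces `1 - 2λ² = 0`. The equation then reads
`p · (9 p p'² - 2 (1 - p²)(4 p² - 3)) = 0`; analytic functions on a connected set have no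
zero divisors, so for nonconstant `p` the second factor vanishes identically, which is absurd
at `a`, where it equals `6`. -/

theorem AnalyticOnNhd.ne_zero_of_sq_mul_deriv_sq_eq {U : Set ℂ} (hUconn : IsPreconnected U)
    {p : ℂ → ℂ} (hp : AnalyticOnNhd ℂ p U)
    (heq : ∀ x ∈ U, 9 * p x ^ 2 * deriv p x ^ 2 = 2 * (1 - p x ^ 2) * (4 * p x ^ 3 - 3 * p x))
    (hp_ne : ¬ ∀ x ∈ U, p x = 0) {a : ℂ} (ha : a ∈ U) :
    p a ≠ 0 := by
  intro hpa
  have hfactor : ∀ x ∈ U,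
      p x * (9 * p x * deriv p x ^ 2 - 2 * (1 - p x ^ 2) * (4 * p x ^ 2 - 3)) = 0 :=
    fun x hx ↦ by linear_combination heq x hx
  have hanalytic : AnalyticOnNhd ℂ
      (fun x ↦ 9 * p x * deriv p x ^ 2 - 2 * (1 - p x ^ 2) * (4 * p x ^ 2 - 3)) U := by
    intro x hx
    have hpx := hp x hx
    have hp'x := hp.deriv x hx
    fun_prop
  obtain hp0 | hcofactor :=
    hp.eq_zero_or_eq_zero_of_mul_eq_zero hanalytic hfactor hUconn
  · exact hp_ne hp0
  · have h6 := hcofactor a ha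
    rw [hpa] at h6
    norm_num at h6

theorem stmt_13_general (lam : ℝ)
    (U : Set ℂ) (hU : IsOpen U) (hUconn : IsPreconnected U)
    (p : ℂ → ℂ) (hp : DifferentiableOn ℂ p U)
    (heq : ∀ x ∈ U, 9 * p x ^ 2 * (deriv p x) ^ 2 =
      2 * (1 - p x ^ 2) * (4 * p x ^ 3 - 3 * p x + 1 - 2 * (lam : ℂ) ^ 2))
    (hnc : ¬ ∃ k : ℂ, ∀ x ∈ U, p x = k)
    (a : ℂ) (ha : a ∈ U) :
    p a ≠ 0 := by
  intro hpa
  have hlam : 1 - 2 * (lam : ℂ) ^ 2 = 0 := by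
    have heqa := heq a ha
    rw [hpa] at heqa
    linear_combination -heqa / 2
  refine hp.analyticOnNhd hU |>.ne_zero_of_sq_mul_deriv_sq_eq hUconn (fun x hx ↦ ?_)
    (fun h ↦ hnc ⟨0, h⟩) ha hpa
  linear_combination heq x hx + 2 * (1 - p x ^ 2) * hlam

theorem stmt_13 (lam : ℝ) (hlam0 : 0 < lam) (hlam1 : lam < 1)
    (U : Set ℂ) (hU : IsOpen U) (hUconn : IsPreconnected U)
    (p : ℂ → ℂ) (hp : DifferentiableOn ℂ p U)
    (heq : ∀ x ∈ U, 9 * p x ^ 2 * (deriv p x) ^ 2 =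
      2 * (1 - p x ^ 2) * (4 * p x ^ 3 - 3 * p x + 1 - 2 * (lam : ℂ) ^ 2))
    (hnc : ¬ ∃ k : ℂ, ∀ x ∈ U, p x = k)
    (a : ℂ) (ha : a ∈ U) :
    p a ≠ 0 :=
  stmt_13_general lam U hU hUconn p hp heq hnc a ha
end

section
/- Let Λ be a constant and ∇ a nonconstant analytic function on a connected domain satisfying [(9/8)(∇')² + Λ(∇ − 1)]² = ∇(∇ − 1)²(4∇ − 3)². Then ∇ has no zeros. -/
/-!
Put `P = (9/8) ∇'² + Λ (∇ - 1)` and `q = X (X - 1)² (4X - 3)²`, so that `P² = q ∘ ∇` and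
`P' = ((9/4) ∇'' + Λ) ∇'`. Differentiating gives `(2 P ((9/4) ∇'' + Λ) - q' ∘ ∇) ∇' = 0`. As `∇` is
nonconstant, `∇'` vanishes only at isolated points, so the first factor vanishes identically by
continuity. At a zero of `∇` we have `P² = q(0) = 0`, which would force `q'(0) = 9` to vanish.
-/

open Filter Topology Polynomial

theorem AnalyticOnNhd.eventually_deriv_ne_zero {𝕜 F : Type*} [RCLike 𝕜] [NormedAddCommGroup F]
    [NormedSpace 𝕜 F] [CompleteSpace F] {f : 𝕜 → F} {U : Set 𝕜} (hf : AnalyticOnNhd 𝕜 f U)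
    (hU : IsOpen U) (hUc : IsPreconnected U) (hnc : ¬ ∃ k, ∀ x ∈ U, f x = k) {a : 𝕜}
    (ha : a ∈ U) : ∀ᶠ x in 𝓝[≠] a, deriv f x ≠ 0 := by
  refine (hf.deriv a ha).eventually_eq_zero_or_eventually_ne_zero.resolve_left fun h => hnc ?_
  exact hU.exists_is_const_of_deriv_eq_zero hUc hf.differentiableOn
    (hf.deriv.eqOn_zero_of_preconnected_of_eventuallyEq_zero hUc ha h)

theorem ContinuousAt.eq_zero_of_eventually_mul_eq_zero {X M₀ : Type*} [TopologicalSpace X]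
    [MulZeroClass M₀] [NoZeroDivisors M₀] [TopologicalSpace M₀] [T2Space M₀]
    {g h : X → M₀} {a : X} [(𝓝[≠] a).NeBot] (hg : ContinuousAt g a)
    (hgh : ∀ᶠ x in 𝓝 a, g x * h x = 0) (hh : ∀ᶠ x in 𝓝[≠] a, h x ≠ 0) : g a = 0 := by
  have hg0 : ∀ᶠ x in 𝓝[≠] a, g x = 0 := by
    filter_upwards [eventually_nhdsWithin_of_eventually_nhds hgh, hh] with x hx hhx
    exact (mul_eq_zero.mp hx).resolve_right hhx
  exact tendsto_nhds_unique (hg.tendsto.mono_left nhdsWithin_le_nhds)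
    (tendsto_const_nhds.congr' (hg0.mono fun _ h => h.symm))

theorem eval_derivative_eq_of_sq_eq_eval {𝕜 : Type*} [RCLike 𝕜] {p : 𝕜[X]} {f P R : 𝕜 → 𝕜}
    {U : Set 𝕜} (hU : IsOpen U) (hUc : IsPreconnected U) (hf : AnalyticOnNhd 𝕜 f U)
    (hnc : ¬ ∃ k, ∀ x ∈ U, f x = k) (hP : ∀ x ∈ U, HasDerivAt P (R x * deriv f x) x)
    (hsq : ∀ x ∈ U, P x ^ 2 = p.eval (f x)) {a : 𝕜} (ha : a ∈ U) (hR : ContinuousAt R a) :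
    p.derivative.eval (f a) = 2 * P a * R a := by
  have hdiff : ∀ x ∈ U, (2 * P x * R x - p.derivative.eval (f x)) * deriv f x = 0 := by
    intro x hx
    have hsq' : (fun y => p.eval (f y)) =ᶠ[𝓝 x] fun y => P y ^ 2 :=
      eventually_of_mem (hU.mem_nhds hx) fun y hy => (hsq y hy).symm
    have hlhs := (hP x hx).pow 2
    have hrhs := ((p.hasDerivAt (f x)).comp x
      (hf x hx).differentiableAt.hasDerivAt).congr_of_eventuallyEq hsq'.symm
    have := hlhs.unique hrhs
    push_cast at this
    linear_combination this
  have hcont : ContinuousAt (fun x => 2 * P x * R x - p.derivative.eval (f x)) a :=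
    ((continuousAt_const.mul (hP a ha).continuousAt).mul hR).sub
      (p.derivative.continuous.continuousAt.comp (hf a ha).continuousAt)
  have := hcont.eq_zero_of_eventually_mul_eq_zero
    (eventually_of_mem (hU.mem_nhds ha) hdiff) (hf.eventually_deriv_ne_zero hU hUc hnc ha)
  exact (sub_eq_zero.mp this).symm

theorem hasDerivAt_deriv_sq_add {𝕜 : Type*} [RCLike 𝕜] {f : 𝕜 → 𝕜} {x : 𝕜} (c Λ : 𝕜)
    (hf : DifferentiableAt 𝕜 f x) (hf' : DifferentiableAt 𝕜 (deriv f) x) :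
    HasDerivAt (fun y => c * deriv f y ^ 2 + Λ * (f y - 1))
      ((2 * c * deriv (deriv f) x + Λ) * deriv f x) x := by
  refine (((hf'.hasDerivAt.fun_pow 2).const_mul c).add
    ((hf.hasDerivAt.sub_const 1).const_mul Λ)).congr_deriv ?_
  push_cast
  ring

theorem stmt_16 (Λ : ℂ)
    (U : Set ℂ) (hU : IsOpen U) (hUconn : IsPreconnected U)
    (nab : ℂ → ℂ) (hnab : DifferentiableOn ℂ nab U)
    (heq : ∀ x ∈ U, ((9 / 8) * (deriv nab x) ^ 2 + Λ * (nab x - 1)) ^ 2 =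
      nab x * (nab x - 1) ^ 2 * (4 * nab x - 3) ^ 2)
    (hnc : ¬ ∃ k : ℂ, ∀ x ∈ U, nab x = k) :
    ∀ x ∈ U, nab x ≠ 0 := by
  intro a ha hzero
  have hA : AnalyticOnNhd ℂ nab U := hnab.analyticOnNhd hU
  have key := eval_derivative_eq_of_sq_eq_eval (p := X * (X - 1) ^ 2 * (4 * X - 3) ^ 2)
    hU hUconn hA hnc
    (fun x hx => hasDerivAt_deriv_sq_add (9 / 8) Λ (hA x hx).differentiableAt
      (hA.deriv x hx).differentiableAt)
    (fun x hx => by simpa using heq x hx) ha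
    ((continuousAt_const.mul (hA.deriv.deriv a ha).continuousAt).add continuousAt_const)
  have hPa : 9 / 8 * deriv nab a ^ 2 + Λ * (nab a - 1) = 0 := by
    simpa [hzero] using heq a ha
  rw [hPa, hzero] at key
  norm_num at key
end
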